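/- There exists a constant C > 0 such that for every positive integer L, every Δ ∈ (0, 1/2], and every real x with 0 < |x| < 2L, the function d_Δ(x) = (1/L)·(Δ·cot(πΔx/L) − (1/2)·cot(πx/(2L))) satisfies |d_Δ(x)| ≤ C/(2L − |x|) (with the convention d_Δ(0) = 0, for which the bound holds trivially). -/

import Mathlib

/-!
Write `g t = 1 / t - cot t`. On `(0, π)` one has `0 ≤ g t ≤ 1 / sin t - cot t = tan (t / 2)`, and
Jordan's inequality for `cos (t / 2)` gives `tan (t / 2) ≤ π / (π - t)`. With `b = π x / (2 L)` and
`a = 2 Δ b ≤ b` the poles `Δ / a = 1 / (2 b)` cancel, so `L d_Δ(x) = g b / 2 - Δ g a` is a difference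
of two numbers in `[0, π / (2 (π - b))]`. Hence `|d_Δ(x)| ≤ 1 / (2 L - |x|)`: the constant `C = 1`
works.
-/

/-- `d_Δ(x) = (1/L)(Δ·cot(πΔx/L) − (1/2)·cot(πx/(2L)))`, where `cot u = cos u / sin u`. -/
noncomputable def dDelta (L : ℕ) (Δ x : ℝ) : ℝ :=
  (1 / (L : ℝ)) *
    (Δ * (Real.cos (Real.pi * Δ * x / L) / Real.sin (Real.pi * Δ * x / L)) -
      (1 / 2) * (Real.cos (Real.pi * x / (2 * L)) / Real.sin (Real.pi * x / (2 * L))))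

open Real

namespace Real

lemma cos_div_sin_le_inv {t : ℝ} (ht : 0 < t) (htπ : t < π) : cos t / sin t ≤ t⁻¹ := by
  have hsin : 0 < sin t := sin_pos_of_pos_of_lt_pi ht htπ
  rcases lt_or_ge t (π / 2) with h | h
  · have hcos : 0 < cos t := cos_pos_of_mem_Ioo ⟨by linarith, h⟩
    have := lt_tan ht h
    rw [tan_eq_sin_div_cos, lt_div_iff₀ hcos] at this
    rw [div_le_iff₀ hsin, inv_mul_eq_div, le_div_iff₀ ht]
    linarith
  · have hcos : cos t ≤ 0 := cos_nonpos_of_pi_div_two_le_of_le h (by linarith)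
    exact (div_nonpos_of_nonpos_of_nonneg hcos hsin.le).trans (inv_pos.2 ht).le

lemma one_sub_cos_div_sin_le {t : ℝ} (ht : 0 < t) (htπ : t < π) :
    (1 - cos t) / sin t ≤ π / (π - t) := by
  have hs : 0 < sin (t / 2) := sin_pos_of_pos_of_lt_pi (by linarith) (by linarith)
  have hc : 0 < 1 - 2 / π * (t / 2) := by
    rw [sub_pos, div_mul_eq_mul_div, div_lt_one pi_pos]; linarith
  have hjordan : 1 - 2 / π * (t / 2) ≤ cos (t / 2) := one_sub_mul_le_cos (by linarith) (by linarith)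
  have hhalf : (1 - cos t) / sin t = sin (t / 2) / cos (t / 2) := by
    have hc' : 0 < cos (t / 2) := hc.trans_le hjordan
    have ht2 : t = 2 * (t / 2) := by ring
    rw [ht2, cos_two_mul, sin_two_mul]
    field_simp
    linear_combination -2 * sin_sq_add_cos_sq (t / 2)
  calc (1 - cos t) / sin t = sin (t / 2) / cos (t / 2) := hhalf
    _ ≤ 1 / (1 - 2 / π * (t / 2)) := div_le_div₀ zero_le_one (sin_le_one _) hc hjordan
    _ = π / (π - t) := by field_simp

lemma inv_sub_cos_div_sin_nonneg {t : ℝ} (ht : 0 < t) (htπ : t < π) : 0 ≤ t⁻¹ - cos t / sin t :=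
  sub_nonneg.2 (cos_div_sin_le_inv ht htπ)

lemma inv_sub_cos_div_sin_le {t : ℝ} (ht : 0 < t) (htπ : t < π) :
    t⁻¹ - cos t / sin t ≤ π / (π - t) := by
  have hsin : 0 < sin t := sin_pos_of_pos_of_lt_pi ht htπ
  calc t⁻¹ - cos t / sin t ≤ (sin t)⁻¹ - cos t / sin t := by
        gcongr; exact (sin_lt ht).le
    _ = (1 - cos t) / sin t := by rw [sub_div, one_div]
    _ ≤ π / (π - t) := one_sub_cos_div_sin_le ht htπ

end Real

lemma dDelta_neg (L : ℕ) (Δ x : ℝ) : dDelta L Δ (-x) = -dDelta L Δ x := by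
  simp only [dDelta, mul_neg, neg_div, sin_neg, cos_neg]
  ring

lemma abs_dDelta_abs (L : ℕ) (Δ x : ℝ) : |dDelta L Δ (|x|)| = |dDelta L Δ x| := by
  rcases abs_choice x with h | h <;> simp only [h, dDelta_neg, abs_neg]

lemma abs_dDelta_le_of_pos {L : ℕ} (hL : 0 < L) {Δ : ℝ} (hΔ : 0 < Δ) (hΔ' : Δ ≤ 1 / 2) {x : ℝ}
    (hx : 0 < x) (hx2 : x < 2 * L) : |dDelta L Δ x| ≤ 1 / (2 * L - x) := by
  have hL' : (0 : ℝ) < L := Nat.cast_pos.2 hL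
  set b := π * x / (2 * L) with hb
  have hb0 : 0 < b := by positivity
  have hbπ : b < π := by rw [hb, div_lt_iff₀ (by positivity)]; nlinarith [pi_pos]
  have ha0 : 0 < 2 * Δ * b := by positivity
  have hab : 2 * Δ * b ≤ b := by nlinarith
  have hform : dDelta L Δ x = (L : ℝ)⁻¹ * (2⁻¹ * (b⁻¹ - cos b / sin b) -
      Δ * ((2 * Δ * b)⁻¹ - cos (2 * Δ * b) / sin (2 * Δ * b))) := by
    rw [dDelta, show π * Δ * x / L = 2 * Δ * b by rw [hb]; field_simp, ← hb]
    field_simp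
    ring
  have hgb_nonneg := inv_sub_cos_div_sin_nonneg hb0 hbπ
  have hga_nonneg := inv_sub_cos_div_sin_nonneg ha0 (hab.trans_lt hbπ)
  have hgb_le := inv_sub_cos_div_sin_le hb0 hbπ
  have hga_le : (2 * Δ * b)⁻¹ - cos (2 * Δ * b) / sin (2 * Δ * b) ≤ π / (π - b) :=
    (inv_sub_cos_div_sin_le ha0 (hab.trans_lt hbπ)).trans (by gcongr)
  have hcore : |2⁻¹ * (b⁻¹ - cos b / sin b) -
      Δ * ((2 * Δ * b)⁻¹ - cos (2 * Δ * b) / sin (2 * Δ * b))| ≤ 2⁻¹ * (π / (π - b)) :=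
    abs_sub_le_iff.2 ⟨by nlinarith [mul_nonneg hΔ.le hga_nonneg],
      by nlinarith [mul_le_mul_of_nonneg_right hΔ' hga_nonneg]⟩
  rw [hform, abs_mul, abs_of_pos (inv_pos.2 hL')]
  calc (L : ℝ)⁻¹ * |_| ≤ (L : ℝ)⁻¹ * (2⁻¹ * (π / (π - b))) := by gcongr
    _ = 1 / (2 * L - x) := by
      have : 2 * (L : ℝ) - x ≠ 0 := by linarith
      rw [hb]; field_simp

/-- There is a constant `C > 0` such that for every positive
integer `L`, every `Δ ∈ (0, 1/2]`, and every real `x` with `0 < |x| < 2L`,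
`|d_Δ(x)| ≤ C/(2L − |x|)`. -/
theorem dDelta_bound :
    ∃ C > (0 : ℝ), ∀ L : ℕ, 0 < L → ∀ Δ : ℝ, 0 < Δ → Δ ≤ 1 / 2 →
      ∀ x : ℝ, 0 < |x| → |x| < 2 * (L : ℝ) →
        |dDelta L Δ x| ≤ C / (2 * (L : ℝ) - |x|) := by
  refine ⟨1, one_pos, fun L hL Δ hΔ hΔ' x hx hx2 => ?_⟩
  rw [← abs_dDelta_abs]
  exact abs_dDelta_le_of_pos hL hΔ hΔ' hx hx2
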